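/- arXiv:1405.4611 — 3 statements merged into one kernel-verified Lean document; each statement's English description precedes it below -/
import Mathlib

section
/- Let A, B be unital C*-algebras, P₁ a nontrivial projection in A, P₂ = 1 - P₁, and Φ : A → B a bijective unital map satisfying Φ(XP + λPX*) = Φ(X)Φ(P) + λΦ(P)Φ(X)* for all X ∈ A, all P ∈ {P₁, P₂}, and λ ∈ {-1, +1}. Then for all A₁₁ ∈ P₁AP₁ and B₁₂ ∈ P₁AP₂, Φ(A₁₁ + B₁₂) = Φ(A₁₁) + Φ(B₁₂). -/
theorem stmt_4 {A B : Type*}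
    [NormedRing A] [StarRing A] [CStarRing A] [CompleteSpace A]
    [NormedAlgebra ℂ A] [StarModule ℂ A]
    [NormedRing B] [StarRing B] [CStarRing B] [CompleteSpace B]
    [NormedAlgebra ℂ B] [StarModule ℂ B]
    (Φ : A → B) (hbij : Function.Bijective Φ) (hΦ1 : Φ 1 = 1)
    (P₁ : A) (hidem : P₁ * P₁ = P₁) (hsa : star P₁ = P₁)
    (hP0 : P₁ ≠ 0) (hPI : P₁ ≠ 1)
    (hplus : ∀ X : A, ∀ P ∈ ({P₁, 1 - P₁} : Set A),
      Φ (X * P + P * star X) = Φ X * Φ P + Φ P * star (Φ X))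
    (hminus : ∀ X : A, ∀ P ∈ ({P₁, 1 - P₁} : Set A),
      Φ (X * P - P * star X) = Φ X * Φ P - Φ P * star (Φ X))
    (A₁₁ B₁₂ : A)
    (hA : ∃ Y : A, A₁₁ = P₁ * Y * P₁)
    (hB : ∃ Y : A, B₁₂ = P₁ * Y * (1 - P₁)) :
    Φ (A₁₁ + B₁₂) = Φ A₁₁ + Φ B₁₂ := by
  obtain ⟨Y, rfl⟩ := hA
  obtain ⟨Z, rfl⟩ := hB
  set P₂ : A := 1 - P₁ with hP₂
  have hmem1 : P₁ ∈ ({P₁, P₂} : Set A) := Set.mem_insert _ _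
  have hmem2 : P₂ ∈ ({P₁, P₂} : Set A) := Set.mem_insert_of_mem _ rfl
  -- basic projection algebra
  have h12 : P₁ * P₂ = 0 := by simp [hP₂, mul_sub, hidem]
  have h21 : P₂ * P₁ = 0 := by simp [hP₂, sub_mul, hidem]
  have h22 : P₂ * P₂ = P₂ := by
    simp [hP₂, mul_sub, sub_mul, hidem]
  have hsa2 : star P₂ = P₂ := by simp [hP₂, hsa]
  set Ae : A := P₁ * Y * P₁ with hAe
  set Be : A := P₁ * Z * P₂ with hBe
  have hstarA : star Ae = P₁ * star Y * P₁ := by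
    simp [hAe, star_mul, hsa, mul_assoc]
  have hstarB : star Be = P₂ * star Z * P₁ := by
    simp [hBe, star_mul, hsa, hsa2, mul_assoc]
  have hA2 : Ae * P₂ = 0 := by rw [hAe, mul_assoc, h12, mul_zero]
  have h2A : P₂ * star Ae = 0 := by
    rw [hstarA, ← mul_assoc, ← mul_assoc, h21, zero_mul, zero_mul]
  have hA1 : Ae * P₁ = Ae := by rw [hAe, mul_assoc, hidem]
  have h1A : P₁ * star Ae = star Ae := by
    rw [hstarA, ← mul_assoc, ← mul_assoc, hidem]
  have hB2 : Be * P₂ = Be := by rw [hBe, mul_assoc, h22]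
  have h2B : P₂ * star Be = star Be := by
    rw [hstarB, ← mul_assoc, ← mul_assoc, h22]
  have hB1 : Be * P₁ = 0 := by rw [hBe, mul_assoc, h21, mul_zero]
  have h1B : P₁ * star Be = 0 := by
    rw [hstarB, ← mul_assoc, ← mul_assoc, h12, zero_mul, zero_mul]
  -- Φ 0 = 0
  have h0 : Φ 0 = 0 := by
    have := hminus 1 P₁ hmem1
    simpa [hΦ1] using this
  -- choose preimage T of Φ Ae + Φ Be
  obtain ⟨T, hT⟩ := hbij.surjective (Φ Ae + Φ Be)
  have keyP₂ : T * P₂ = Be := by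
    have e1 : Φ (T * P₂ + P₂ * star T) = Φ (Be + star Be) := by
      rw [hplus T P₂ hmem2, hT]
      have r1 := hplus Ae P₂ hmem2
      have r2 := hplus Be P₂ hmem2
      rw [hA2, h2A, add_zero, h0] at r1
      rw [hB2, h2B] at r2
      rw [star_add, add_mul, mul_add]
      rw [show Φ Ae * Φ P₂ + Φ Be * Φ P₂ + (Φ P₂ * star (Φ Ae) + Φ P₂ * star (Φ Be))
          = (Φ Ae * Φ P₂ + Φ P₂ * star (Φ Ae)) + (Φ Be * Φ P₂ + Φ P₂ * star (Φ Be)) by abel]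
      rw [← r1, ← r2, zero_add]
    have e2 : Φ (T * P₂ - P₂ * star T) = Φ (Be - star Be) := by
      rw [hminus T P₂ hmem2, hT]
      have r1 := hminus Ae P₂ hmem2
      have r2 := hminus Be P₂ hmem2
      rw [hA2, h2A, sub_zero, h0] at r1
      rw [hB2, h2B] at r2
      rw [star_add, add_mul, mul_add]
      rw [show Φ Ae * Φ P₂ + Φ Be * Φ P₂ - (Φ P₂ * star (Φ Ae) + Φ P₂ * star (Φ Be))
          = (Φ Ae * Φ P₂ - Φ P₂ * star (Φ Ae)) + (Φ Be * Φ P₂ - Φ P₂ * star (Φ Be)) by abel]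
      rw [← r1, ← r2, zero_add]
    have f1 := hbij.injective e1
    have f2 := hbij.injective e2
    have hsum : T * P₂ + T * P₂ = Be + Be := by
      calc T * P₂ + T * P₂
          = (T * P₂ + P₂ * star T) + (T * P₂ - P₂ * star T) := by abel
        _ = (Be + star Be) + (Be - star Be) := by rw [f1, f2]
        _ = Be + Be := by abel
    have h2 : (2 : ℂ) • (T * P₂) = (2 : ℂ) • Be := by
      rw [two_smul, two_smul]; exact hsum
    have := congrArg (fun x => (2 : ℂ)⁻¹ • x) h2
    simpa [smul_smul] using this
  have keyP₁ : T * P₁ = Ae := by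
    have e1 : Φ (T * P₁ + P₁ * star T) = Φ (Ae + star Ae) := by
      rw [hplus T P₁ hmem1, hT]
      have r1 := hplus Ae P₁ hmem1
      have r2 := hplus Be P₁ hmem1
      rw [hA1, h1A] at r1
      rw [hB1, h1B, add_zero, h0] at r2
      rw [star_add, add_mul, mul_add]
      rw [show Φ Ae * Φ P₁ + Φ Be * Φ P₁ + (Φ P₁ * star (Φ Ae) + Φ P₁ * star (Φ Be))
          = (Φ Ae * Φ P₁ + Φ P₁ * star (Φ Ae)) + (Φ Be * Φ P₁ + Φ P₁ * star (Φ Be)) by abel]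
      rw [← r1, ← r2, add_zero]
    have e2 : Φ (T * P₁ - P₁ * star T) = Φ (Ae - star Ae) := by
      rw [hminus T P₁ hmem1, hT]
      have r1 := hminus Ae P₁ hmem1
      have r2 := hminus Be P₁ hmem1
      rw [hA1, h1A] at r1
      rw [hB1, h1B, sub_zero, h0] at r2
      rw [star_add, add_mul, mul_add]
      rw [show Φ Ae * Φ P₁ + Φ Be * Φ P₁ - (Φ P₁ * star (Φ Ae) + Φ P₁ * star (Φ Be))
          = (Φ Ae * Φ P₁ - Φ P₁ * star (Φ Ae)) + (Φ Be * Φ P₁ - Φ P₁ * star (Φ Be)) by abel]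
      rw [← r1, ← r2, add_zero]
    have f1 := hbij.injective e1
    have f2 := hbij.injective e2
    have hsum : T * P₁ + T * P₁ = Ae + Ae := by
      calc T * P₁ + T * P₁
          = (T * P₁ + P₁ * star T) + (T * P₁ - P₁ * star T) := by abel
        _ = (Ae + star Ae) + (Ae - star Ae) := by rw [f1, f2]
        _ = Ae + Ae := by abel
    have h2 : (2 : ℂ) • (T * P₁) = (2 : ℂ) • Ae := by
      rw [two_smul, two_smul]; exact hsum
    have := congrArg (fun x => (2 : ℂ)⁻¹ • x) h2
    simpa [smul_smul] using this
  have hTval : T = Ae + Be := by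
    have h' : T * (P₁ + P₂) = Ae + Be := by rw [mul_add, keyP₁, keyP₂]
    simpa [hP₂] using h'
  rw [← hTval, hT]
end

section
/- Under the hypotheses of the Main Theorem (Φ : A → B bijective unital between unital C*-algebras, preserving Φ(XP + λPX*) = Φ(X)Φ(P) + λΦ(P)Φ(X)* for P ∈ {P₁, 1-P₁} and λ = ±1, where P₁ is a nontrivial projection), one has Φ(A₁₂ + B₂₁) = Φ(A₁₂) + Φ(B₂₁) for all A₁₂ ∈ P₁AP₂ and B₂₁ ∈ P₂AP₁. -/
theorem stmt_5 {A B : Type*}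
    [NormedRing A] [StarRing A] [CStarRing A] [CompleteSpace A]
    [NormedAlgebra ℂ A] [StarModule ℂ A]
    [NormedRing B] [StarRing B] [CStarRing B] [CompleteSpace B]
    [NormedAlgebra ℂ B] [StarModule ℂ B]
    (Φ : A → B) (hbij : Function.Bijective Φ) (hΦ1 : Φ 1 = 1)
    (P₁ : A) (hidem : P₁ * P₁ = P₁) (hsa : star P₁ = P₁)
    (hP0 : P₁ ≠ 0) (hPI : P₁ ≠ 1)
    (hplus : ∀ X : A, ∀ P ∈ ({P₁, 1 - P₁} : Set A),
      Φ (X * P + P * star X) = Φ X * Φ P + Φ P * star (Φ X))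
    (hminus : ∀ X : A, ∀ P ∈ ({P₁, 1 - P₁} : Set A),
      Φ (X * P - P * star X) = Φ X * Φ P - Φ P * star (Φ X))
    (A₁₂ B₂₁ : A)
    (hA : ∃ Y : A, A₁₂ = P₁ * Y * (1 - P₁))
    (hB : ∃ Y : A, B₂₁ = (1 - P₁) * Y * P₁) :
    Φ (A₁₂ + B₂₁) = Φ A₁₂ + Φ B₂₁ := by
  obtain ⟨Y, hY⟩ := hA
  obtain ⟨Z, hZ⟩ := hB
  have hP₁mem : P₁ ∈ ({P₁, 1 - P₁} : Set A) := Or.inl rfl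
  have hP₂mem : (1 - P₁) ∈ ({P₁, 1 - P₁} : Set A) := Or.inr rfl
  have h21 : (1 - P₁) * P₁ = 0 := by rw [sub_mul, one_mul, hidem, sub_self]
  have h12 : P₁ * (1 - P₁) = 0 := by rw [mul_sub, mul_one, hidem, sub_self]
  have h22 : (1 - P₁) * (1 - P₁) = 1 - P₁ := by rw [mul_sub, mul_one, h21, sub_zero]
  have hsa2 : star (1 - P₁) = 1 - P₁ := by rw [star_sub, star_one, hsa]
  -- corner relations
  have hA1 : A₁₂ * P₁ = 0 := by rw [hY, mul_assoc, h21, mul_zero]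
  have hA2 : A₁₂ * (1 - P₁) = A₁₂ := by rw [hY, mul_assoc, h22]
  have hAs : star A₁₂ = (1 - P₁) * star Y * P₁ := by
    rw [hY, star_mul, star_mul, hsa, hsa2, mul_assoc]
  have hA1s : P₁ * star A₁₂ = 0 := by
    rw [hAs, ← mul_assoc, ← mul_assoc, h12, zero_mul, zero_mul]
  have hA2s : (1 - P₁) * star A₁₂ = star A₁₂ := by
    rw [hAs, ← mul_assoc, ← mul_assoc, h22]
  have hB1 : B₂₁ * P₁ = B₂₁ := by rw [hZ, mul_assoc, hidem]
  have hB2 : B₂₁ * (1 - P₁) = 0 := by rw [hZ, mul_assoc, h12, mul_zero]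
  have hBs : star B₂₁ = P₁ * star Z * (1 - P₁) := by
    rw [hZ, star_mul, star_mul, hsa, hsa2, mul_assoc]
  have hB1s : P₁ * star B₂₁ = star B₂₁ := by
    rw [hBs, ← mul_assoc, ← mul_assoc, hidem]
  have hB2s : (1 - P₁) * star B₂₁ = 0 := by
    rw [hBs, ← mul_assoc, ← mul_assoc, h21, zero_mul, zero_mul]
  -- Φ(0) = 0
  have hΦ0 : Φ 0 = 0 := by
    have := hminus 1 P₁ hP₁mem
    simpa [hΦ1] using this
  -- pick T with Φ T = Φ A₁₂ + Φ B₂₁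
  obtain ⟨T, hT⟩ := hbij.2 (Φ A₁₂ + Φ B₂₁)
  -- with P = P₁
  have e1p : T * P₁ + P₁ * star T = B₂₁ + star B₂₁ := by
    apply hbij.1
    rw [hplus T P₁ hP₁mem, hT]
    have hA' := hplus A₁₂ P₁ hP₁mem
    have hB' := hplus B₂₁ P₁ hP₁mem
    rw [hA1, hA1s, add_zero, hΦ0] at hA'
    rw [hB1, hB1s] at hB'
    calc (Φ A₁₂ + Φ B₂₁) * Φ P₁ + Φ P₁ * star (Φ A₁₂ + Φ B₂₁)
        = (Φ B₂₁ * Φ P₁ + Φ P₁ * star (Φ B₂₁)) + (Φ A₁₂ * Φ P₁ + Φ P₁ * star (Φ A₁₂)) := by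
          rw [star_add]; noncomm_ring
      _ = Φ (B₂₁ + star B₂₁) + 0 := by rw [← hA', ← hB']
      _ = Φ (B₂₁ + star B₂₁) := add_zero _
  have e1m : T * P₁ - P₁ * star T = B₂₁ - star B₂₁ := by
    apply hbij.1
    rw [hminus T P₁ hP₁mem, hT]
    have hA' := hminus A₁₂ P₁ hP₁mem
    have hB' := hminus B₂₁ P₁ hP₁mem
    rw [hA1, hA1s, zero_sub, neg_zero, hΦ0] at hA'
    rw [hB1, hB1s] at hB'
    calc (Φ A₁₂ + Φ B₂₁) * Φ P₁ - Φ P₁ * star (Φ A₁₂ + Φ B₂₁)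
        = (Φ B₂₁ * Φ P₁ - Φ P₁ * star (Φ B₂₁)) + (Φ A₁₂ * Φ P₁ - Φ P₁ * star (Φ A₁₂)) := by
          rw [star_add]; noncomm_ring
      _ = Φ (B₂₁ - star B₂₁) + 0 := by rw [← hA', ← hB']
      _ = Φ (B₂₁ - star B₂₁) := add_zero _
  have hTP1 : T * P₁ = B₂₁ := by
    have h2 : T * P₁ + T * P₁ = B₂₁ + B₂₁ := by
      have := congrArg₂ (· + ·) e1p e1m
      calc T * P₁ + T * P₁ = (T * P₁ + P₁ * star T) + (T * P₁ - P₁ * star T) := by abel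
        _ = (B₂₁ + star B₂₁) + (B₂₁ - star B₂₁) := this
        _ = B₂₁ + B₂₁ := by abel
    have h2' : (2 : ℂ) • (T * P₁) = (2 : ℂ) • B₂₁ := by
      rw [two_smul, two_smul]; exact h2
    exact smul_right_injective A two_ne_zero h2'
  -- with P = P₂
  have e2p : T * (1 - P₁) + (1 - P₁) * star T = A₁₂ + star A₁₂ := by
    apply hbij.1
    rw [hplus T _ hP₂mem, hT]
    have hA' := hplus A₁₂ _ hP₂mem
    have hB' := hplus B₂₁ _ hP₂mem
    rw [hB2, hB2s, add_zero, hΦ0] at hB'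
    rw [hA2, hA2s] at hA'
    calc (Φ A₁₂ + Φ B₂₁) * Φ (1 - P₁) + Φ (1 - P₁) * star (Φ A₁₂ + Φ B₂₁)
        = (Φ A₁₂ * Φ (1 - P₁) + Φ (1 - P₁) * star (Φ A₁₂))
            + (Φ B₂₁ * Φ (1 - P₁) + Φ (1 - P₁) * star (Φ B₂₁)) := by
          rw [star_add]; noncomm_ring
      _ = Φ (A₁₂ + star A₁₂) + 0 := by rw [← hA', ← hB']
      _ = Φ (A₁₂ + star A₁₂) := add_zero _
  have e2m : T * (1 - P₁) - (1 - P₁) * star T = A₁₂ - star A₁₂ := by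
    apply hbij.1
    rw [hminus T _ hP₂mem, hT]
    have hA' := hminus A₁₂ _ hP₂mem
    have hB' := hminus B₂₁ _ hP₂mem
    rw [hB2, hB2s, zero_sub, neg_zero, hΦ0] at hB'
    rw [hA2, hA2s] at hA'
    calc (Φ A₁₂ + Φ B₂₁) * Φ (1 - P₁) - Φ (1 - P₁) * star (Φ A₁₂ + Φ B₂₁)
        = (Φ A₁₂ * Φ (1 - P₁) - Φ (1 - P₁) * star (Φ A₁₂))
            + (Φ B₂₁ * Φ (1 - P₁) - Φ (1 - P₁) * star (Φ B₂₁)) := by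
          rw [star_add]; noncomm_ring
      _ = Φ (A₁₂ - star A₁₂) + 0 := by rw [← hA', ← hB']
      _ = Φ (A₁₂ - star A₁₂) := add_zero _
  have hTP2 : T * (1 - P₁) = A₁₂ := by
    have h2 : T * (1 - P₁) + T * (1 - P₁) = A₁₂ + A₁₂ := by
      calc T * (1 - P₁) + T * (1 - P₁)
          = (T * (1 - P₁) + (1 - P₁) * star T) + (T * (1 - P₁) - (1 - P₁) * star T) := by abel
        _ = (A₁₂ + star A₁₂) + (A₁₂ - star A₁₂) := by rw [e2p, e2m]
        _ = A₁₂ + A₁₂ := by abel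
    have h2' : (2 : ℂ) • (T * (1 - P₁)) = (2 : ℂ) • A₁₂ := by
      rw [two_smul, two_smul]; exact h2
    exact smul_right_injective A two_ne_zero h2'
  have hTeq : T = A₁₂ + B₂₁ := by
    have : T * P₁ + T * (1 - P₁) = T := by rw [← mul_add, add_sub_cancel, mul_one]
    rw [hTP1, hTP2] at this
    rw [← this]; abel
  rw [← hTeq, hT]
end

section
/- Under the hypotheses of the Main Theorem, Φ(P₁) and Φ(P₂) are projections in B: Φ(P_i)* = Φ(P_i) and Φ(P_i)² = Φ(P_i) for i = 1, 2. -/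
theorem stmt_12 {A B : Type*}
    [NormedRing A] [StarRing A] [CStarRing A] [CompleteSpace A]
    [NormedAlgebra ℂ A] [StarModule ℂ A]
    [NormedRing B] [StarRing B] [CStarRing B] [CompleteSpace B]
    [NormedAlgebra ℂ B] [StarModule ℂ B]
    (Φ : A → B) (hbij : Function.Bijective Φ) (hΦ1 : Φ 1 = 1)
    (P₁ : A) (hidem : P₁ * P₁ = P₁) (hsa : star P₁ = P₁)
    (hP0 : P₁ ≠ 0) (hPI : P₁ ≠ 1)
    (hplus : ∀ X : A, ∀ P ∈ ({P₁, 1 - P₁} : Set A),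
      Φ (X * P + P * star X) = Φ X * Φ P + Φ P * star (Φ X))
    (hminus : ∀ X : A, ∀ P ∈ ({P₁, 1 - P₁} : Set A),
      Φ (X * P - P * star X) = Φ X * Φ P - Φ P * star (Φ X)) :
    ∀ P ∈ ({P₁, 1 - P₁} : Set A),
      star (Φ P) = Φ P ∧ Φ P * Φ P = Φ P := by
  intro P hP
  -- P is a self-adjoint idempotent
  have hP' := hP
  simp only [Set.mem_insert_iff, Set.mem_singleton_iff] at hP'
  have hPi : P * P = P := by
    rcases hP' with rfl | rfl
    · exact hidem
    · rw [sub_mul, one_mul, mul_sub, mul_one, hidem]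
      abel
  have hPs : star P = P := by
    rcases hP' with rfl | rfl
    · exact hsa
    · rw [star_sub, star_one, hsa]
  -- Φ 0 = 0
  have h0 : Φ 0 = 0 := by
    have h := hminus 1 P hP
    rw [one_mul, star_one, mul_one, sub_self, hΦ1, one_mul, star_one, mul_one,
      sub_self] at h
    exact h
  -- Q² = Q Q*
  have h1 : Φ P * Φ P = Φ P * star (Φ P) := by
    have h := hminus P P hP
    rw [hPi, hPs, hPi, sub_self, h0] at h
    exact sub_eq_zero.mp h.symm
  -- 2Q = Q² + Q Q*
  have hb : Φ (P + P) = Φ P + Φ P := by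
    have h := hplus 1 P hP
    rw [one_mul, star_one, mul_one, hΦ1, one_mul, star_one, mul_one] at h
    exact h
  have h2 : Φ P + Φ P = Φ P * Φ P + Φ P * star (Φ P) := by
    have h := hplus P P hP
    rw [hPi, hPs, hPi, hb] at h
    exact h
  -- hence Q = Q²
  have h4 : Φ P = Φ P * Φ P := by
    have h3 : (2 : ℂ) • Φ P = (2 : ℂ) • (Φ P * Φ P) := by
      rw [two_smul, two_smul, h2, h1]
    exact smul_right_injective B two_ne_zero h3
  have h6 : Φ P = Φ P * star (Φ P) := h4.trans h1
  have h5 : star (Φ P) = Φ P := by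
    calc star (Φ P) = star (Φ P * star (Φ P)) := by rw [← h6]
    _ = Φ P * star (Φ P) := by rw [star_mul, star_star]
    _ = Φ P := h6.symm
  exact ⟨h5, h4.symm⟩
end
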